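/- arXiv:1109.3102 — 4 statements merged into one kernel-verified Lean document; each statement's English description precedes it below -/
import Mathlib

section
/- Let K ∈ ℕ, M ≥ K, N = 2M+1, and let p: ℝ → ℂ be continuous with support in [−K/2, K/2] such that Φ_p(l/N) > 0 for all l ∈ {0,…,2M}. Let G̃_M = F D F* where F is the unitary N×N DFT matrix and D is the diagonal matrix with entries Φ_p(l/N). For t ∈ ℝ let p^M(t) = (p(t+M), …, p(t−M))ᵀ ∈ ℂ^N. Then for every t with |t| ≤ M − K/2 and every m ∈ {−M,…,M}, the (m+M)-th entry of G̃_M^{−1/2} p^M(t) equals (1/N) ∑_{l=0}^{2M} e^{−2πiml/N} (Zp)(t, l/N) / √(Φ_p(l/N)), where (Zp)(t,ν) = ∑_{n∈ℤ} p(t−n) e^{2πinν} is the Zak transform of p. -/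
open MeasureTheory Complex Filter Topology Matrix
open scoped Real ENNReal FourierTransform

noncomputable section

/-- The 1-periodic symbol `Φ_p(ν) = ∑_{k∈ℤ} |p̂(ν+k)|²` of `p`. -/
def symbolPhi (p : ℝ → ℂ) (ν : ℝ) : ℝ := ∑' k : ℤ, ‖𝓕 p (ν + k)‖ ^ 2

/-- The Zak transform `(Zp)(t,ν) = ∑_{n∈ℤ} p(t−n) e^{2πinν}`. -/
def zak (p : ℝ → ℂ) (t ν : ℝ) : ℂ :=
  ∑' n : ℤ, p (t - n) * Complex.exp (2 * (Real.pi : ℂ) * Complex.I * (n : ℂ) * (ν : ℂ))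

/-- The unitary `N×N` DFT matrix `[F]_{nm} = N^{−1/2} e^{−2πinm/N}`. -/
def dftMatrix (N : ℕ) : Matrix (Fin N) (Fin N) ℂ :=
  Matrix.of fun n m =>
    ((Real.sqrt N)⁻¹ : ℂ) *
      Complex.exp (-2 * (Real.pi : ℂ) * Complex.I * ((n : ℕ) : ℂ) * ((m : ℕ) : ℂ) / (N : ℂ))

/-- `G̃_M^{−1/2} = F D^{−1/2} F*`, where `D` is the diagonal of the samples `Φ_p(l/N)`. -/
def strangInvSqrt (p : ℝ → ℂ) (N : ℕ) : Matrix (Fin N) (Fin N) ℂ :=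
  dftMatrix N *
    Matrix.diagonal (fun l : Fin N =>
      ((Real.sqrt (symbolPhi p (((l : ℕ) : ℝ) / (N : ℝ))))⁻¹ : ℂ)) *
    (dftMatrix N)ᴴ

/-- The vector `p^M(t) = (p(t+M), …, p(t−M))ᵀ ∈ ℂ^N`, `N = 2M+1`. -/
def pVec (p : ℝ → ℂ) (M : ℕ) (t : ℝ) (j : Fin (2 * M + 1)) : ℂ :=
  p (t + (M : ℝ) - ((j : ℕ) : ℝ))

/-! The support condition and `|t| ≤ M − K/2` force `p (t − n) = 0` for `|n| > M`, so the Zak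
series at `(t, l/N)` is a finite sum over the entries of `p^M(t)`; after the shift `n = j − M` it
is, up to the factor `√N e^{2πiMl/N}`, the `l`-th entry of `F* p^M(t)`. Applying `F D^{−1/2}` to
this vector gives the formula. -/

lemma abs_le_of_apply_sub_ne_zero {E : Type*} [Zero E] {p : ℝ → E} {a b t x : ℝ}
    (hsupp : Function.support p ⊆ Set.Icc (-a) a) (ht : |t| ≤ b - a) (hx : p (t - x) ≠ 0) :
    |x| ≤ b :=
  calc |x| = |t - (t - x)| := by rw [sub_sub_cancel]
    _ ≤ |t| + |t - x| := abs_sub _ _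
    _ ≤ b := by linarith [abs_le.mpr (hsupp hx)]

lemma zak_eq_sum_pVec {p : ℝ → ℂ} {M : ℕ} {t : ℝ} (hp : ∀ n : ℤ, p (t - n) ≠ 0 → |n| ≤ M)
    (ν : ℝ) :
    zak p t ν = ∑ j : Fin (2 * M + 1),
      pVec p M t j * exp (2 * π * I * (((j : ℕ) : ℂ) - M) * ν) := by
  set g : Fin (2 * M + 1) → ℤ := fun j => (j : ℕ) - (M : ℤ)
  have hg : Function.Injective g := fun a b h => Fin.ext (by simp only [g] at h; omega)
  have hrange : Function.support (fun n : ℤ => p (t - n) * exp (2 * π * I * n * ν))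
      ⊆ Set.range g := by
    intro n hn
    have hnM := abs_le.mp (hp n (left_ne_zero_of_mul hn))
    exact ⟨⟨(n + M).toNat, by omega⟩, by simp only [g]; omega⟩
  rw [zak, ← hg.tsum_eq hrange, tsum_fintype]
  refine Finset.sum_congr rfl fun j _ => ?_
  simp only [pVec, g]
  push_cast
  ring_nf

lemma strangInvSqrt_mulVec_apply (p : ℝ → ℂ) (N : ℕ) (v : Fin N → ℂ) (i : Fin N) :
    (strangInvSqrt p N *ᵥ v) i = ∑ l, dftMatrix N i l *
      ((Real.sqrt (symbolPhi p ((l : ℕ) / N)) : ℂ))⁻¹ * ((dftMatrix N)ᴴ *ᵥ v) l := by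
  rw [strangInvSqrt, ← mulVec_mulVec, ← mulVec_mulVec, mulVec, dotProduct]
  simp only [mulVec_diagonal, mul_assoc]

lemma star_dftMatrix_apply (N : ℕ) (j l : Fin N) :
    star (dftMatrix N j l) =
      ((Real.sqrt N)⁻¹ : ℂ) * exp (2 * π * I * ((j : ℕ) : ℂ) * ((l : ℕ) : ℂ) / N) := by
  simp [dftMatrix, ← exp_conj, map_div₀, map_ofNat]

lemma dftMatrix_conjTranspose_mulVec_pVec {p : ℝ → ℂ} {M : ℕ} {t : ℝ}
    (hp : ∀ n : ℤ, p (t - n) ≠ 0 → |n| ≤ M) (l : Fin (2 * M + 1)) :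
    ((dftMatrix (2 * M + 1))ᴴ *ᵥ pVec p M t) l =
      ((Real.sqrt (2 * M + 1 : ℕ))⁻¹ : ℂ) *
        exp (2 * π * I * M * ((l : ℕ) : ℂ) / (2 * M + 1 : ℕ)) *
        zak p t ((l : ℕ) / (2 * M + 1 : ℕ)) := by
  rw [zak_eq_sum_pVec hp, Finset.mul_sum, mulVec, dotProduct]
  refine Finset.sum_congr rfl fun j _ => ?_
  rw [conjTranspose_apply, star_dftMatrix_apply]
  have hN : ((2 * M + 1 : ℕ) : ℂ) ≠ 0 := Nat.cast_ne_zero.mpr (Nat.succ_ne_zero _)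
  have hsplit : 2 * π * I * ((j : ℕ) : ℂ) * ((l : ℕ) : ℂ) / (2 * M + 1 : ℕ) =
      2 * π * I * M * ((l : ℕ) : ℂ) / (2 * M + 1 : ℕ) +
        2 * π * I * (((j : ℕ) : ℂ) - M) * (((l : ℕ) / (2 * M + 1 : ℕ) : ℝ) : ℂ) := by
    push_cast
    field_simp
    ring
  rw [hsplit, exp_add]
  ring

theorem stmt7_general (K M : ℕ) (p : ℝ → ℂ)
    (hsupp : Function.support p ⊆ Set.Icc (-(K : ℝ) / 2) ((K : ℝ) / 2)) :
    ∀ i : Fin (2 * M + 1), ∀ t : ℝ, |t| ≤ (M : ℝ) - (K : ℝ) / 2 →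
      (strangInvSqrt p (2 * M + 1)).mulVec (pVec p M t) i
        = (1 / ((2 * M + 1 : ℕ) : ℂ)) *
            ∑ l : Fin (2 * M + 1),
              Complex.exp (-2 * (Real.pi : ℂ) * Complex.I * ((((i : ℕ) : ℤ) - (M : ℤ)) : ℂ)
                  * ((l : ℕ) : ℂ) / ((2 * M + 1 : ℕ) : ℂ)) *
                zak p t (((l : ℕ) : ℝ) / ((2 * M + 1 : ℕ) : ℝ)) /
                  (Real.sqrt (symbolPhi p (((l : ℕ) : ℝ) / ((2 * M + 1 : ℕ) : ℝ))) : ℂ) := by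
  intro i t ht
  rw [neg_div] at hsupp
  have hp (n : ℤ) (hn : p (t - n) ≠ 0) : |n| ≤ M := by
    exact_mod_cast abs_le_of_apply_sub_ne_zero hsupp ht hn
  rw [strangInvSqrt_mulVec_apply, Finset.mul_sum]
  refine Finset.sum_congr rfl fun l _ => ?_
  rw [dftMatrix_conjTranspose_mulVec_pVec hp, dftMatrix, of_apply]
  have hsq : ((Real.sqrt (2 * M + 1 : ℕ))⁻¹ : ℂ) * ((Real.sqrt (2 * M + 1 : ℕ))⁻¹ : ℂ) =
      ((2 * M + 1 : ℕ) : ℂ)⁻¹ := by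
    rw [← mul_inv, ← ofReal_mul, Real.mul_self_sqrt (Nat.cast_nonneg _), ofReal_natCast]
  have hexp : exp (-2 * π * I * ((i : ℕ) : ℂ) * ((l : ℕ) : ℂ) / (2 * M + 1 : ℕ)) *
        exp (2 * π * I * M * ((l : ℕ) : ℂ) / (2 * M + 1 : ℕ)) =
      exp (-2 * π * I * ((((i : ℕ) : ℤ) - (M : ℤ)) : ℂ) * ((l : ℕ) : ℂ) / (2 * M + 1 : ℕ)) := by
    rw [← exp_add]
    congr 1
    push_cast
    ring
  rw [← hexp, one_div, ← hsq]
  ring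

/-- for continuous `p` supported in `[−K/2,K/2]`, `M ≥ K`, `N = 2M+1`, with
`Φ_p(l/N) > 0` for all `l`, and every `t` with `|t| ≤ M − K/2`, the `(m+M)`-th entry of
`G̃_M^{−1/2} p^M(t)` (here indexed by `i = m+M : Fin N`, so `m = i − M`) equals
`(1/N) ∑_{l=0}^{2M} e^{−2πiml/N} (Zp)(t,l/N)/√(Φ_p(l/N))`. -/
theorem stmt7 (K M : ℕ) (hMK : K ≤ M) (p : ℝ → ℂ) (hc : Continuous p)
    (hsupp : Function.support p ⊆ Set.Icc (-(K : ℝ) / 2) ((K : ℝ) / 2))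
    (hΦpos : ∀ l : Fin (2 * M + 1),
      0 < symbolPhi p (((l : ℕ) : ℝ) / ((2 * M + 1 : ℕ) : ℝ))) :
    ∀ i : Fin (2 * M + 1), ∀ t : ℝ, |t| ≤ (M : ℝ) - (K : ℝ) / 2 →
      (strangInvSqrt p (2 * M + 1)).mulVec (pVec p M t) i
        = (1 / ((2 * M + 1 : ℕ) : ℂ)) *
            ∑ l : Fin (2 * M + 1),
              Complex.exp (-2 * (Real.pi : ℂ) * Complex.I * ((((i : ℕ) : ℤ) - (M : ℤ)) : ℂ)
                  * ((l : ℕ) : ℂ) / ((2 * M + 1 : ℕ) : ℂ)) *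
                zak p t (((l : ℕ) : ℝ) / ((2 * M + 1 : ℕ) : ℝ)) /
                  (Real.sqrt (symbolPhi p (((l : ℕ) : ℝ) / ((2 * M + 1 : ℕ) : ℝ))) : ℂ) :=
  stmt7_general K M p hsupp
end
end

section
/- Let K ∈ ℕ and let p: ℝ → ℂ be continuous with support in [−K/2, K/2] such that Φ_p is continuous and Φ_p(ν) ≥ A > 0 for all ν. Then for every k ∈ ℤ and every t ∈ ℝ, the Riemann-type sums (1/(2M+1)) ∑_{l=0}^{2M} e^{−2πikl/(2M+1)} (Zp)(t, l/(2M+1)) / √(Φ_p(l/(2M+1))) converge as M → ∞ to ∫₀¹ e^{−2πikν} (Zp)(t,ν) / √(Φ_p(ν)) dν = ∫₀¹ (Z p(·−k))(t,ν) / √(Φ_p(ν)) dν; i.e. the ALO pulses p̃°ᴹ_k(t) converge pointwise on compact sets to the limit pulse p̃°_k(t). -/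
/-!
For fixed `t`, the Zak transform of a compactly supported `p` is a trigonometric polynomial
in `ν`, and `√Φ_p ≥ √A > 0` is continuous, so the integrand is continuous on `[0, 1]`.
The sums are its left-endpoint Riemann sums for the partitions into `2M + 1` cells, which
converge to the integral by uniform continuity. The equality of the two integrals is the quasi-periodicity of `Z`.
-/

open MeasureTheory Complex Filter Topology
open scoped Real ENNReal FourierTransform

noncomputable section

open Set
open scoped Interval

section RiemannSum

variable {E : Type*} [NormedAddCommGroup E] [NormedSpace ℝ E] {f : ℝ → E}

lemma norm_intervalIntegral_sub_smul_le [CompleteSpace E] {a b ε : ℝ} {c : E}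
    (hf : IntervalIntegrable f volume a b) (h : ∀ x ∈ Ι a b, ‖f x - c‖ ≤ ε) :
    ‖(∫ x in a..b, f x) - (b - a) • c‖ ≤ ε * |b - a| := by
  rw [← intervalIntegral.integral_const,
    ← intervalIntegral.integral_sub hf intervalIntegrable_const]
  exact intervalIntegral.norm_integral_le_of_norm_le_const h

lemma Icc_div_natCast_subset_Icc_zero_one {l n : ℕ} (hl : l < n) :
    Icc ((l : ℝ) / n) ((l + 1 : ℕ) / n) ⊆ Icc 0 1 :=
  Icc_subset_Icc (by positivity) (div_le_one_of_le₀ (by exact_mod_cast hl) n.cast_nonneg)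

lemma intervalIntegral_zero_one_eq_sum_range {n : ℕ} (hn : n ≠ 0)
    (hf : IntervalIntegrable f volume 0 1) :
    ∫ x in (0 : ℝ)..1, f x
      = ∑ l ∈ Finset.range n, ∫ x in (l / n : ℝ)..((l + 1 : ℕ) / n : ℝ), f x := by
  have hcell : ∀ l < n, uIcc ((l : ℝ) / n) ((l + 1 : ℕ) / n) ⊆ uIcc 0 1 := fun l hl => by
    rw [uIcc_of_le (by gcongr; simp), uIcc_of_le zero_le_one]
    exact Icc_div_natCast_subset_Icc_zero_one hl
  rw [intervalIntegral.sum_integral_adjacent_intervals (a := fun l : ℕ => (l : ℝ) / n)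
    (fun l hl => hf.mono_set (hcell l hl))]
  simp [hn]

lemma norm_integral_cell_sub_smul_le [CompleteSpace E] {ε δ : ℝ} (hf : ContinuousOn f (Icc 0 1))
    (hfδ : ∀ x ∈ Icc 0 1, ∀ y ∈ Icc 0 1, dist x y ≤ δ → dist (f x) (f y) ≤ ε)
    {l n : ℕ} (hl : l < n) (hnδ : (n : ℝ)⁻¹ ≤ δ) :
    ‖(∫ x in (l / n : ℝ)..((l + 1 : ℕ) / n : ℝ), f x) - (n : ℝ)⁻¹ • f (l / n)‖
      ≤ ε * (n : ℝ)⁻¹ := by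
  have hn0 : (0 : ℝ) < n := by norm_cast; omega
  have hsub := Icc_div_natCast_subset_Icc_zero_one hl
  have hlen : ((l + 1 : ℕ) : ℝ) / n - l / n = (n : ℝ)⁻¹ := by push_cast; field_simp; ring
  have hle : (l : ℝ) / n ≤ ((l + 1 : ℕ) : ℝ) / n := by gcongr; simp
  have hclose : ∀ x ∈ Ι ((l : ℝ) / n) ((l + 1 : ℕ) / n), ‖f x - f (l / n)‖ ≤ ε := by
    intro x hx
    rw [uIoc_of_le hle] at hx
    rw [← dist_eq_norm]
    refine hfδ x (hsub (Ioc_subset_Icc_self hx)) _ (hsub (left_mem_Icc.2 hle)) ?_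
    calc dist x (l / n) = x - l / n := by rw [Real.dist_eq, abs_of_pos (by linarith [hx.1])]
      _ ≤ (n : ℝ)⁻¹ := by linarith [hx.2]
      _ ≤ δ := hnδ
  have hint : IntervalIntegrable f volume ((l : ℝ) / n) ((l + 1 : ℕ) / n) :=
    (hf.mono hsub).intervalIntegrable_of_Icc hle
  have := norm_intervalIntegral_sub_smul_le hint hclose
  rwa [hlen, abs_of_pos (inv_pos.2 hn0)] at this

theorem tendsto_riemannSum_intervalIntegral [CompleteSpace E] (hf : ContinuousOn f (Icc 0 1)) :
    Tendsto (fun n : ℕ => (n : ℝ)⁻¹ • ∑ l ∈ Finset.range n, f (l / n)) atTop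
      (𝓝 (∫ x in (0 : ℝ)..1, f x)) := by
  rw [Metric.tendsto_atTop]
  intro ε hε
  obtain ⟨δ, hδ, hfδ⟩ := Metric.uniformContinuousOn_iff_le.1
    (isCompact_Icc.uniformContinuousOn_of_continuous hf) (ε / 2) (half_pos hε)
  obtain ⟨N, hN⟩ := exists_nat_one_div_lt hδ
  refine ⟨N + 1, fun n hn => ?_⟩
  have hnδ : (n : ℝ)⁻¹ ≤ δ := calc
    (n : ℝ)⁻¹ ≤ 1 / (N + 1) := by rw [one_div]; gcongr; exact_mod_cast hn
    _ ≤ δ := hN.le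
  calc dist ((n : ℝ)⁻¹ • ∑ l ∈ Finset.range n, f (l / n)) (∫ x in (0 : ℝ)..1, f x)
      = ‖∑ l ∈ Finset.range n, ((∫ x in (l / n : ℝ)..((l + 1 : ℕ) / n : ℝ), f x)
          - (n : ℝ)⁻¹ • f (l / n))‖ := by
        rw [dist_comm, dist_eq_norm, intervalIntegral_zero_one_eq_sum_range (n := n) (by omega)
          (hf.intervalIntegrable_of_Icc zero_le_one), Finset.smul_sum, Finset.sum_sub_distrib]
    _ ≤ ∑ l ∈ Finset.range n, ε / 2 * (n : ℝ)⁻¹ := norm_sum_le_of_le _ fun l hl =>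
        norm_integral_cell_sub_smul_le hf hfδ (Finset.mem_range.1 hl) hnδ
    _ = ε / 2 := by
        rw [Finset.sum_const, Finset.card_range, nsmul_eq_mul]
        field_simp [show (n : ℝ) ≠ 0 by norm_cast; omega]
    _ < ε := half_lt_self hε

end RiemannSum

section Zak

lemma finite_setOf_ne_zero_of_support_subset_Icc {p : ℝ → ℂ} {a b : ℝ}
    (hp : Function.support p ⊆ Icc a b) (t : ℝ) : {n : ℤ | p (t - n) ≠ 0}.Finite :=
  (finite_Icc ⌈t - b⌉ ⌊t - a⌋).subset fun n hn => by
    obtain ⟨h₁, h₂⟩ := hp hn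
    exact ⟨Int.ceil_le.2 (by linarith), Int.le_floor.2 (by linarith)⟩

lemma continuous_zak_of_finite {p : ℝ → ℂ} {t : ℝ}
    (h : {n : ℤ | p (t - n) ≠ 0}.Finite) : Continuous (zak p t) := by
  have hsum : zak p t = fun ν : ℝ => ∑ n ∈ h.toFinset,
      p (t - n) * Complex.exp (2 * (Real.pi : ℂ) * Complex.I * (n : ℂ) * (ν : ℂ)) :=
    funext fun ν => tsum_eq_sum fun n hn => by simp_all
  rw [hsum]
  fun_prop

lemma zak_comp_sub_intCast (p : ℝ → ℂ) (k : ℤ) (t ν : ℝ) :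
    zak (fun s => p (s - k)) t ν
      = Complex.exp (-2 * (Real.pi : ℂ) * Complex.I * (k : ℂ) * (ν : ℂ)) * zak p t ν := by
  set g : ℤ → ℂ := fun m =>
    Complex.exp (-2 * (Real.pi : ℂ) * Complex.I * (k : ℂ) * (ν : ℂ)) *
      (p (t - m) * Complex.exp (2 * (Real.pi : ℂ) * Complex.I * (m : ℂ) * (ν : ℂ)))
  have hshift : ∀ n : ℤ, p (t - n - k) *
      Complex.exp (2 * (Real.pi : ℂ) * Complex.I * (n : ℂ) * (ν : ℂ)) = g (n + k) := by
    intro n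
    simp only [g, mul_left_comm _ (p _), ← Complex.exp_add]
    congr 2 <;> push_cast <;> ring
  calc zak (fun s => p (s - k)) t ν = ∑' n : ℤ, g (n + k) := tsum_congr hshift
    _ = ∑' m : ℤ, g m := (Equiv.addRight k).tsum_eq g
    _ = _ := tsum_mul_left

end Zak

theorem stmt8_general (K : ℕ) (p : ℝ → ℂ)
    (hsupp : Function.support p ⊆ Set.Icc (-(K : ℝ) / 2) ((K : ℝ) / 2))
    (A : ℝ) (hA : 0 < A) (hΦc : Continuous (symbolPhi p))
    (hΦA : ∀ ν : ℝ, A ≤ symbolPhi p ν) :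
    ∀ k : ℤ, ∀ t : ℝ,
      Tendsto (fun M : ℕ =>
          (1 / ((2 * M + 1 : ℕ) : ℂ)) *
            ∑ l ∈ Finset.range (2 * M + 1),
              Complex.exp (-2 * (Real.pi : ℂ) * Complex.I * (k : ℂ) * (l : ℂ)
                  / ((2 * M + 1 : ℕ) : ℂ)) *
                zak p t ((l : ℝ) / ((2 * M + 1 : ℕ) : ℝ)) /
                  (Real.sqrt (symbolPhi p ((l : ℝ) / ((2 * M + 1 : ℕ) : ℝ))) : ℂ))
        atTop
        (nhds (∫ ν in (0 : ℝ)..1,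
          Complex.exp (-2 * (Real.pi : ℂ) * Complex.I * (k : ℂ) * (ν : ℂ)) *
            zak p t ν / (Real.sqrt (symbolPhi p ν) : ℂ))) ∧
      (∫ ν in (0 : ℝ)..1,
          Complex.exp (-2 * (Real.pi : ℂ) * Complex.I * (k : ℂ) * (ν : ℂ)) *
            zak p t ν / (Real.sqrt (symbolPhi p ν) : ℂ))
        = ∫ ν in (0 : ℝ)..1,
            zak (fun s => p (s - (k : ℝ))) t ν / (Real.sqrt (symbolPhi p ν) : ℂ) := by
  intro k t
  set g : ℝ → ℂ := fun ν =>
    Complex.exp (-2 * (Real.pi : ℂ) * Complex.I * (k : ℂ) * (ν : ℂ)) *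
      zak p t ν / (Real.sqrt (symbolPhi p ν) : ℂ)
  have hsqrt_ne : ∀ ν, (Real.sqrt (symbolPhi p ν) : ℂ) ≠ 0 := fun ν => by
    exact_mod_cast (Real.sqrt_pos.2 (hA.trans_le (hΦA ν))).ne'
  have hzak := continuous_zak_of_finite (finite_setOf_ne_zero_of_support_subset_Icc hsupp t)
  have hg : Continuous g := Continuous.div (by fun_prop) (by fun_prop) hsqrt_ne
  have hodd : Tendsto (fun M : ℕ => 2 * M + 1) atTop atTop :=
    tendsto_atTop_atTop.2 fun b => ⟨b, fun M hM => by omega⟩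
  refine ⟨((tendsto_riemannSum_intervalIntegral hg.continuousOn).comp hodd).congr fun M => ?_,
    intervalIntegral.integral_congr fun ν _ => by simp only [zak_comp_sub_intCast]⟩
  simp only [Function.comp_apply, g, Complex.real_smul, Finset.mul_sum]
  refine Finset.sum_congr rfl fun l _ => ?_
  push_cast
  simp only [one_div, mul_div_assoc]

/-- for continuous `p` supported in `[−K/2,K/2]` with continuous symbol
`Φ_p ≥ A > 0`, the Riemann-type sums
`(1/(2M+1)) ∑_{l=0}^{2M} e^{−2πikl/(2M+1)} (Zp)(t,l/(2M+1))/√(Φ_p(l/(2M+1)))`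
converge, as `M → ∞`, to `∫₀¹ e^{−2πikν}(Zp)(t,ν)/√(Φ_p(ν)) dν
= ∫₀¹ (Z p(·−k))(t,ν)/√(Φ_p(ν)) dν`, for every `k ∈ ℤ` and `t ∈ ℝ`. -/
theorem stmt8 (K : ℕ) (p : ℝ → ℂ) (hc : Continuous p)
    (hsupp : Function.support p ⊆ Set.Icc (-(K : ℝ) / 2) ((K : ℝ) / 2))
    (A : ℝ) (hA : 0 < A) (hΦc : Continuous (symbolPhi p))
    (hΦA : ∀ ν : ℝ, A ≤ symbolPhi p ν) :
    ∀ k : ℤ, ∀ t : ℝ,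
      Tendsto (fun M : ℕ =>
          (1 / ((2 * M + 1 : ℕ) : ℂ)) *
            ∑ l ∈ Finset.range (2 * M + 1),
              Complex.exp (-2 * (Real.pi : ℂ) * Complex.I * (k : ℂ) * (l : ℂ)
                  / ((2 * M + 1 : ℕ) : ℂ)) *
                zak p t ((l : ℝ) / ((2 * M + 1 : ℕ) : ℝ)) /
                  (Real.sqrt (symbolPhi p ((l : ℝ) / ((2 * M + 1 : ℕ) : ℝ))) : ℂ))
        atTop
        (nhds (∫ ν in (0 : ℝ)..1,
          Complex.exp (-2 * (Real.pi : ℂ) * Complex.I * (k : ℂ) * (ν : ℂ)) *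
            zak p t ν / (Real.sqrt (symbolPhi p ν) : ℂ))) ∧
      (∫ ν in (0 : ℝ)..1,
          Complex.exp (-2 * (Real.pi : ℂ) * Complex.I * (k : ℂ) * (ν : ℂ)) *
            zak p t ν / (Real.sqrt (symbolPhi p ν) : ℂ))
        = ∫ ν in (0 : ℝ)..1,
            zak (fun s => p (s - (k : ℝ))) t ν / (Real.sqrt (symbolPhi p ν) : ℂ) :=
  stmt8_general K p hsupp A hA hΦc hΦA
end
end

section
/- Let K ∈ ℕ, M ≥ K, N = 2M+1, and let p: ℝ → ℂ be continuous with support in [−K/2, K/2] with Φ_p(l/N) > 0 for all l. For k ∈ {−M,…,M} define the ALO pulse p̃°ᴹ_k(t) = (1/N) ∑_{l=0}^{2M} e^{−2πikl/N} (Zp)(t, l/N) / √(Φ_p(l/N)) for |t| ≤ M − K/2 (and 0 otherwise). Then the ALO pulses have local shift character: for every k with |k| < M and every t with |t| ≤ M − K/2 − |k|, one has p̃°ᴹ_k(t+k) = p̃°ᴹ_0(t). -/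
/-!
The Zak transform is quasi-periodic in time: `(Zp)(t + k, ν) = e^{2πikν} (Zp)(t, ν)` for `k ∈ ℤ`.
At the frequencies `ν = l/N` this phase is exactly the inverse of the modulation
`e^{−2πikl/N}` in the definition of `p̃°ᴹ_k`, so the sums defining `p̃°ᴹ_k(t + k)` and `p̃°ᴹ_0(t)`
agree term by term; the bound on `t` keeps both `t` and `t + k` inside the window
`|·| ≤ M − K/2` where the pulses are given by these sums.
-/

open MeasureTheory Complex Filter Topology
open scoped Real ENNReal FourierTransform

noncomputable section

/-- The ALO pulse `p̃°ᴹ_k(t) = (1/N) ∑_{l=0}^{2M} e^{−2πikl/N} (Zp)(t,l/N)/√(Φ_p(l/N))`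
for `|t| ≤ M − K/2` (and `0` otherwise), `N = 2M+1`. -/
def aloPulse (p : ℝ → ℂ) (K M : ℕ) (k : ℤ) (t : ℝ) : ℂ :=
  if |t| ≤ (M : ℝ) - (K : ℝ) / 2 then
    (1 / ((2 * M + 1 : ℕ) : ℂ)) *
      ∑ l ∈ Finset.range (2 * M + 1),
        Complex.exp (-2 * (Real.pi : ℂ) * Complex.I * (k : ℂ) * (l : ℂ)
            / ((2 * M + 1 : ℕ) : ℂ)) *
          zak p t ((l : ℝ) / ((2 * M + 1 : ℕ) : ℝ)) /
            (Real.sqrt (symbolPhi p ((l : ℝ) / ((2 * M + 1 : ℕ) : ℝ))) : ℂ)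
  else 0

-- Reindexing by a bijection of `ℤ`, so this holds also where the series diverges.
theorem zak_add_intCast (p : ℝ → ℂ) (t ν : ℝ) (k : ℤ) :
    zak p (t + k) ν = exp (2 * π * I * k * ν) * zak p t ν := by
  unfold zak
  rw [← tsum_mul_left, ← (Equiv.addRight k).tsum_eq]
  refine tsum_congr fun n => ?_
  have harg : t + (k : ℝ) - ((n + k : ℤ) : ℝ) = t - n := by push_cast; ring
  have hphase : 2 * π * I * ((n + k : ℤ) : ℂ) * ν
      = 2 * π * I * k * ν + 2 * π * I * n * ν := by push_cast; ring
  rw [Equiv.coe_addRight, harg, hphase, exp_add]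
  ring

theorem exp_neg_mul_exp_div_eq_one (k l N : ℂ) (hN : N ≠ 0) :
    exp (-2 * π * I * k * l / N) * exp (2 * π * I * k * (l / N)) = 1 := by
  rw [← exp_add, ← exp_zero]
  congr 1
  field_simp
  ring

theorem aloPulse_add_intCast (p : ℝ → ℂ) (K M : ℕ) (k : ℤ) (t : ℝ)
    (ht : |t| ≤ (M : ℝ) - K / 2) (htk : |t + k| ≤ (M : ℝ) - K / 2) :
    aloPulse p K M k (t + k) = aloPulse p K M 0 t := by
  have hN : ((2 * M + 1 : ℕ) : ℂ) ≠ 0 := Nat.cast_ne_zero.mpr (Nat.succ_ne_zero _)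
  unfold aloPulse
  rw [if_pos htk, if_pos ht]
  congr 1
  refine Finset.sum_congr rfl fun l _ => ?_
  have hfreq : (((l : ℝ) / ((2 * M + 1 : ℕ) : ℝ) : ℝ) : ℂ) = (l : ℂ) / ((2 * M + 1 : ℕ) : ℂ) := by
    push_cast; ring
  rw [zak_add_intCast, hfreq, ← mul_assoc, exp_neg_mul_exp_div_eq_one _ _ _ hN]
  simp

theorem stmt10_general (K M : ℕ) (p : ℝ → ℂ) :
    ∀ k : ℤ, |k| < (M : ℤ) → ∀ t : ℝ, |t| ≤ (M : ℝ) - (K : ℝ) / 2 - |(k : ℝ)| →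
      aloPulse p K M k (t + k) = aloPulse p K M 0 t := by
  intro k _ t ht
  have hk : 0 ≤ |(k : ℝ)| := abs_nonneg _
  apply aloPulse_add_intCast p K M k t (by linarith)
  calc |t + k| ≤ |t| + |(k : ℝ)| := abs_add_le _ _
    _ ≤ (M : ℝ) - K / 2 := by linarith

/-- local shift character of the ALO pulses: for continuous `p` supported in
`[−K/2,K/2]`, `M ≥ K`, `N = 2M+1`, with `Φ_p(l/N) > 0` for all `l`, and every `k` with
`|k| < M` and `t` with `|t| ≤ M − K/2 − |k|`, one has `p̃°ᴹ_k(t+k) = p̃°ᴹ_0(t)`. -/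
theorem stmt10 (K M : ℕ) (hMK : K ≤ M) (p : ℝ → ℂ) (hc : Continuous p)
    (hsupp : Function.support p ⊆ Set.Icc (-(K : ℝ) / 2) ((K : ℝ) / 2))
    (hΦpos : ∀ l ∈ Finset.range (2 * M + 1),
      0 < symbolPhi p ((l : ℝ) / ((2 * M + 1 : ℕ) : ℝ))) :
    ∀ k : ℤ, |k| < (M : ℤ) → ∀ t : ℝ, |t| ≤ (M : ℝ) - (K : ℝ) / 2 - |(k : ℝ)| →
      aloPulse p K M k (t + k) = aloPulse p K M 0 t :=
  stmt10_general K M p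
end
end

section
/- Let q ∈ L²(ℝ), g ∈ ℓ²(ℤ) with 1-periodic Fourier series ĝ(ν) = ∑_n g_n e^{−2πinν}, and let p ∈ L²(ℝ) satisfy p̂(ν) = ĝ(ν)·q̂(ν) (i.e. p = q ∗' g). Suppose the shift parameter Δ > 0 satisfies 1/Δ ∈ ℕ and ĝ(ν) ≠ 0 for almost every ν. Then the Δ-shift orthogonalization of p coincides with that of q: for almost every ν ∈ ℝ, |p̂(ν)|² / ( (1/Δ) ∑_{k∈ℤ} |p̂(ν − k/Δ)|² ) = |q̂(ν)|² / ( (1/Δ) ∑_{k∈ℤ} |q̂(ν − k/Δ)|² ); i.e. |p̂^{Δ,°}|² = |q̂^{Δ,°}|², so perfect Δ-orthogonalization at rate 1/Δ ∈ ℕ cancels the spectral shaping by g. -/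
open MeasureTheory Complex Filter Topology
open scoped Real ENNReal FourierTransform

noncomputable section

/-!
Since `1/Δ ∈ ℕ`, every shift `k/Δ` is an integer, so the 1-periodic multiplier `ĝ` takes the
same value `ĝ(ν)` at all the points `ν - k/Δ`. The factor `|ĝ(ν)|²` therefore comes out of the
periodized sum in the denominator and cancels against the numerator wherever `ĝ(ν) ≠ 0`.
-/

theorem Function.Periodic.sub_int_div_eq {α : Type*} {f : ℝ → α} (hf : Function.Periodic f 1)
    {Δ : ℝ} {m : ℕ} (hm : Δ * m = 1) (k : ℤ) (ν : ℝ) : f (ν - k / Δ) = f ν := by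
  have hΔ : Δ ≠ 0 := left_ne_zero_of_mul_eq_one hm
  have hshift : (k : ℝ) / Δ = (k * m : ℤ) * 1 := by
    push_cast
    rw [mul_one, div_eq_iff hΔ]
    linear_combination -(k : ℝ) * hm
  rw [hshift, hf.sub_int_mul_eq]

theorem ae_forall_sub_of_ae {G ι : Type*} [MeasurableSpace G] [AddGroup G] [MeasurableAdd G]
    {μ : Measure G} [μ.IsAddRightInvariant] [Countable ι] {P : G → Prop}
    (h : ∀ᵐ x ∂μ, P x) (a : ι → G) : ∀ᵐ x ∂μ, ∀ i, P (x - a i) :=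
  ae_all_iff.2 fun i => (measurePreserving_sub_right μ (a i)).quasiMeasurePreserving.ae h

/-- `shiftOrthPowerSpectrum (𝓕 p) Δ` is the power spectrum `|p̂^{Δ,°}|²` of the `Δ`-shift
orthogonalization of `p`. -/
def shiftOrthPowerSpectrum (F : ℝ → ℂ) (Δ ν : ℝ) : ℝ :=
  ‖F ν‖ ^ 2 / ((1 / Δ) * ∑' k : ℤ, ‖F (ν - k / Δ)‖ ^ 2)

theorem shiftOrthPowerSpectrum_congr_mul {F G : ℝ → ℂ} {Δ ν : ℝ} {c : ℂ} (hc : c ≠ 0)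
    (hG : ∀ k : ℤ, G (ν - k / Δ) = c * F (ν - k / Δ)) :
    shiftOrthPowerSpectrum G Δ ν = shiftOrthPowerSpectrum F Δ ν := by
  have hν : G ν = c * F ν := by simpa using hG 0
  have hsum : ∑' k : ℤ, ‖G (ν - k / Δ)‖ ^ 2 = ‖c‖ ^ 2 * ∑' k : ℤ, ‖F (ν - k / Δ)‖ ^ 2 := by
    rw [← tsum_mul_left]
    exact tsum_congr fun k => by rw [hG k, norm_mul, mul_pow]
  unfold shiftOrthPowerSpectrum
  rw [hsum, hν, norm_mul, mul_pow, mul_left_comm,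
    mul_div_mul_left _ _ (pow_ne_zero _ (norm_ne_zero_iff.2 hc))]

theorem stmt17_general (q p : ℝ → ℂ)
    (ghat : ℝ → ℂ)
    (hper : ∀ ν : ℝ, ghat (ν + 1) = ghat ν)
    (hpF : ∀ᵐ ν : ℝ, 𝓕 p ν = ghat ν * 𝓕 q ν)
    (hg0 : ∀ᵐ ν : ℝ, ghat ν ≠ 0)
    (Δ : ℝ) (hΔinv : ∃ m : ℕ, Δ * (m : ℝ) = 1) :
    ∀ᵐ ν : ℝ,
      ‖𝓕 p ν‖ ^ 2 / ((1 / Δ) * ∑' k : ℤ, ‖𝓕 p (ν - k / Δ)‖ ^ 2)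
        = ‖𝓕 q ν‖ ^ 2 / ((1 / Δ) * ∑' k : ℤ, ‖𝓕 q (ν - k / Δ)‖ ^ 2) := by
  obtain ⟨m, hm⟩ := hΔinv
  filter_upwards [ae_forall_sub_of_ae hpF fun k : ℤ => (k : ℝ) / Δ, hg0] with ν hpFν hgν
  refine shiftOrthPowerSpectrum_congr_mul hgν fun k => ?_
  rw [hpFν k, Function.Periodic.sub_int_div_eq hper hm]

/-- let `q ∈ L²(ℝ)`, `g ∈ ℓ²(ℤ)` with 1-periodic Fourier series
`ĝ(ν) = ∑_n g_n e^{−2πinν}`, and `p` with `p̂ = ĝ·q̂` (i.e. `p = q ∗' g`). If the shift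
`Δ > 0` satisfies `1/Δ ∈ ℕ` and `ĝ(ν) ≠ 0` a.e., then the `Δ`-shift orthogonalizations of
`p` and `q` have the same power spectrum:
`|p̂(ν)|²/((1/Δ)∑_k |p̂(ν−k/Δ)|²) = |q̂(ν)|²/((1/Δ)∑_k |q̂(ν−k/Δ)|²)` a.e. -/
theorem stmt17 (q p : ℝ → ℂ)
    (hq : MemLp q 2 (volume : Measure ℝ)) (hp : MemLp p 2 (volume : Measure ℝ))
    (g : ℤ → ℂ) (hg : Memℓp g 2)
    (ghat : ℝ → ℂ)
    (hghat : ∀ᵐ ν : ℝ, HasSum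
      (fun n : ℤ => g n * Complex.exp (-2 * (Real.pi : ℂ) * Complex.I * (n : ℂ) * (ν : ℂ)))
      (ghat ν))
    (hper : ∀ ν : ℝ, ghat (ν + 1) = ghat ν)
    (hpF : ∀ᵐ ν : ℝ, 𝓕 p ν = ghat ν * 𝓕 q ν)
    (hg0 : ∀ᵐ ν : ℝ, ghat ν ≠ 0)
    (Δ : ℝ) (hΔ : 0 < Δ) (hΔinv : ∃ m : ℕ, Δ * (m : ℝ) = 1) :
    ∀ᵐ ν : ℝ,
      ‖𝓕 p ν‖ ^ 2 / ((1 / Δ) * ∑' k : ℤ, ‖𝓕 p (ν - k / Δ)‖ ^ 2)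
        = ‖𝓕 q ν‖ ^ 2 / ((1 / Δ) * ∑' k : ℤ, ‖𝓕 q (ν - k / Δ)‖ ^ 2) :=
  stmt17_general q p ghat hper hpF hg0 Δ hΔinv
end
end
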